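/- Let n ≥ 3 be odd, m = (n+1)/2, and θ, θ′ ∈ ℝ^n. Assume λ + μ ≠ 0 for all (not necessarily distinct) eigenvalues λ, μ of Ā(θ), and likewise for Ā(θ′). Suppose X and Y are m×m real matrices satisfying X Ā(θ) = Ā(θ′) Y, Y Ā(θ) = Ā(θ′) X, the first column of X equals e₁, and the first row of Y equals e₁ᵀ. Then the first row of X equals e₁ᵀ, the first column of Y equals e₁, θ₁ = θ′₁, and if moreover θ₂ ≠ 0 then |θ₂| = |θ′₂|. -/

import Mathlib

open Matrix

/-- For `n = 2m-1` (odd), the `m×m` symmetric tridiagonal matrix `Ā(θ)` with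
`Ā_{i,i} = θ_{2i-1}` and `Ā_{i,i+1} = Ā_{i+1,i} = -θ_{2i}` (1-indexed). -/
def Abar (m : ℕ) (θ : Fin (2 * m - 1) → ℝ) : Matrix (Fin m) (Fin m) ℝ :=
  Matrix.of fun i j =>
    if i = j then θ ⟨2 * (i : ℕ), by have := i.isLt; omega⟩
    else if h : (i : ℕ) + 1 = (j : ℕ) then -θ ⟨2 * (i : ℕ) + 1, by have := j.isLt; omega⟩
    else if h' : (j : ℕ) + 1 = (i : ℕ) then -θ ⟨2 * (j : ℕ) + 1, by have := i.isLt; omega⟩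
    else 0

lemma anticomm_eq_zero {m : ℕ} {A : Matrix (Fin m) (Fin m) ℝ} (hA : A.IsHermitian)
    (hs : ∀ lam ∈ spectrum ℝ A, ∀ mu ∈ spectrum ℝ A, lam + mu ≠ 0)
    (N : Matrix (Fin m) (Fin m) ℝ) (h : A * N = -(N * A)) : N = 0 := by
  set U : Matrix (Fin m) (Fin m) ℝ := (hA.eigenvectorUnitary : Matrix (Fin m) (Fin m) ℝ) with hU
  have hU1 : star U * U = 1 := Unitary.coe_star_mul_self hA.eigenvectorUnitary
  have hU2 : U * star U = 1 := Unitary.coe_mul_star_self hA.eigenvectorUnitary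
  have hdiag : star U * A * U = diagonal hA.eigenvalues := by
    have h' : star U * A * U = diagonal (RCLike.ofReal ∘ hA.eigenvalues) := by
      have h0 := hA.conjStarAlgAut_star_eigenvectorUnitary
      rw [Unitary.conjStarAlgAut_apply] at h0
      simpa [hU] using h0
    have : (RCLike.ofReal ∘ hA.eigenvalues : Fin m → ℝ) = hA.eigenvalues := by
      funext i; simp
    rw [this] at h'
    exact h'
  set M : Matrix (Fin m) (Fin m) ℝ := star U * N * U with hM
  have e1 : (star U * A * U) * M = star U * (A * N) * U := by
    rw [hM]
    simp only [Matrix.mul_assoc]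
    rw [← Matrix.mul_assoc U (star U) (N * U), hU2, Matrix.one_mul]
  have e2 : M * (star U * A * U) = star U * (N * A) * U := by
    rw [hM]
    simp only [Matrix.mul_assoc]
    rw [← Matrix.mul_assoc U (star U) (A * U), hU2, Matrix.one_mul]
  have key : diagonal hA.eigenvalues * M = -(M * diagonal hA.eigenvalues) := by
    rw [← hdiag, e1, e2, h]
    simp [Matrix.neg_mul, Matrix.mul_neg]
  have hM0 : M = 0 := by
    ext i j
    have hij := congrFun (congrFun key i) j
    rw [Matrix.diagonal_mul, Matrix.neg_apply, Matrix.mul_diagonal] at hij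
    have hne := hs _ (hA.eigenvalues_mem_spectrum_real i) _ (hA.eigenvalues_mem_spectrum_real j)
    have : (hA.eigenvalues i + hA.eigenvalues j) * M i j = 0 := by ring_nf; linarith [hij]
    simpa using (mul_eq_zero.mp this).resolve_left hne
  have : N = U * M * star U := by
    rw [hM]
    simp only [Matrix.mul_assoc]
    rw [← Matrix.mul_assoc U (star U) (N * (U * star U)), hU2, Matrix.one_mul,
      Matrix.mul_one]
  rw [this, hM0, Matrix.mul_zero, Matrix.zero_mul]

lemma Abar_symm (m : ℕ) (θ : Fin (2*m-1) → ℝ) (i j : Fin m) :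
    Abar m θ j i = Abar m θ i j := by
  unfold Abar
  simp only [Matrix.of_apply]
  rcases eq_or_ne i j with h | h
  · subst h; rfl
  · have h1 : ¬ (j = i) := fun hh => h hh.symm
    rw [if_neg h1, if_neg h]
    by_cases h2 : (i:ℕ)+1 = (j:ℕ)
    · have h3 : ¬((j:ℕ)+1 = (i:ℕ)) := by omega
      rw [dif_neg h3, dif_pos h2, dif_pos h2]
    · by_cases h4 : (j:ℕ)+1 = (i:ℕ)
      · rw [dif_pos h4, dif_neg h2, dif_pos h4]
      · rw [dif_neg h4, dif_neg h2, dif_neg h2, dif_neg h4]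

lemma Abar_isHermitian (m : ℕ) (θ : Fin (2*m-1) → ℝ) : (Abar m θ).IsHermitian := by
  ext i j
  simp only [conjTranspose_apply, star_trivial]
  exact Abar_symm m θ i j

lemma Abar_transpose (m : ℕ) (θ : Fin (2*m-1) → ℝ) : (Abar m θ)ᵀ = Abar m θ := by
  ext i j
  rw [Matrix.transpose_apply]
  exact Abar_symm m θ i j

lemma Abar_zero_zero (m : ℕ) (hm : 2 ≤ m) (θ : Fin (2*m-1) → ℝ) :
    Abar m θ ⟨0, by have := hm; omega⟩ ⟨0, by have := hm; omega⟩ = θ ⟨0, by have := hm; omega⟩ := by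
  norm_num [Abar]

lemma Abar_zero_one (m : ℕ) (hm : 2 ≤ m) (θ : Fin (2*m-1) → ℝ) :
    Abar m θ ⟨0, by have := hm; omega⟩ ⟨1, by have := hm; omega⟩ = -θ ⟨1, by have := hm; omega⟩ := by
  norm_num [Abar]

lemma Abar_one_zero (m : ℕ) (hm : 2 ≤ m) (θ : Fin (2*m-1) → ℝ) :
    Abar m θ ⟨1, by have := hm; omega⟩ ⟨0, by have := hm; omega⟩ = -θ ⟨1, by have := hm; omega⟩ := by
  norm_num [Abar]

lemma Abar_apply_zero {m : ℕ} (hm : 2 ≤ m) (θ : Fin (2*m-1) → ℝ) (j : Fin m) :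
    Abar m θ ⟨0, by have := hm; omega⟩ j =
      θ ⟨0, by have := hm; omega⟩ * (Pi.single (⟨0, by have := hm; omega⟩ : Fin m) 1 : Fin m → ℝ) j
        + (-θ ⟨1, by have := hm; omega⟩) * (Pi.single (⟨1, by have := hm; omega⟩ : Fin m) 1 : Fin m → ℝ) j := by
  rcases j with ⟨jv, hj⟩
  unfold Abar
  simp only [Matrix.of_apply, Pi.single_apply, Fin.mk.injEq]
  rcases eq_or_ne jv 0 with h0 | h0
  · subst h0; norm_num
  rcases eq_or_ne jv 1 with h1 | h1
  · subst h1; norm_num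
  · have c1 : ¬ (0 = jv) := by have := hm; omega
    have c2 : ¬ (0 + 1 = jv) := by have := hm; omega
    have c3 : ¬ (jv + 1 = 0) := by have := hm; omega
    simp [c1, c2, c3, h0, h1]

lemma sum_single_mul {m : ℕ} (f : Fin m → ℝ) (k : Fin m) :
    (∑ j, (Pi.single k 1 : Fin m → ℝ) j * f j) = f k := by
  simp [Pi.single_apply, ite_mul]

lemma sum_mul_single {m : ℕ} (f : Fin m → ℝ) (k : Fin m) :
    (∑ j, f j * (Pi.single k 1 : Fin m → ℝ) j) = f k := by
  simp [Pi.single_apply, mul_ite]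

lemma Abar_row_sum {m : ℕ} (hm : 2 ≤ m) (θ : Fin (2*m-1) → ℝ) (f : Fin m → ℝ) :
    (∑ j, Abar m θ ⟨0, by have := hm; omega⟩ j * f j)
      = θ ⟨0, by have := hm; omega⟩ * f ⟨0, by have := hm; omega⟩ - θ ⟨1, by have := hm; omega⟩ * f ⟨1, by have := hm; omega⟩ := by
  have h : ∀ j : Fin m, Abar m θ ⟨0, by have := hm; omega⟩ j * f j
      = θ ⟨0, by have := hm; omega⟩ * ((Pi.single (⟨0, by have := hm; omega⟩ : Fin m) 1 : Fin m → ℝ) j * f j)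
        - θ ⟨1, by have := hm; omega⟩ * ((Pi.single (⟨1, by have := hm; omega⟩ : Fin m) 1 : Fin m → ℝ) j * f j) := by
    intro j; rw [Abar_apply_zero hm θ j]; ring
  rw [Finset.sum_congr rfl (fun j _ => h j), Finset.sum_sub_distrib, ← Finset.mul_sum,
    ← Finset.mul_sum, sum_single_mul f, sum_single_mul f]

lemma Abar_col_sum {m : ℕ} (hm : 2 ≤ m) (θ : Fin (2*m-1) → ℝ) (f : Fin m → ℝ) :
    (∑ j, f j * Abar m θ j ⟨0, by have := hm; omega⟩)
      = θ ⟨0, by have := hm; omega⟩ * f ⟨0, by have := hm; omega⟩ - θ ⟨1, by have := hm; omega⟩ * f ⟨1, by have := hm; omega⟩ := by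
  have h : ∀ j : Fin m, f j * Abar m θ j ⟨0, by have := hm; omega⟩ = Abar m θ ⟨0, by have := hm; omega⟩ j * f j := by
    intro j; rw [Abar_symm m θ ⟨0, by omega⟩ j, mul_comm]
  rw [Finset.sum_congr rfl (fun j _ => h j), Abar_row_sum hm θ f]

set_option maxHeartbeats 1000000 in
/-- One step of the recursive STA argument for the exchange model with transverse field
measured via `Y₁`: if no two eigenvalues of `Ā(θ)` (resp. `Ā(θ')`) sum to zero, and
`X, Y` satisfy `X Ā(θ) = Ā(θ') Y`, `Y Ā(θ) = Ā(θ') X`, with first column of `X` and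
first row of `Y` equal to `e₁`, then the first row of `X` and first column of `Y` are
also `e₁`, `θ₁ = θ'₁`, and (when `θ₂ ≠ 0`) `|θ₂| = |θ'₂|`. -/
theorem stmt19 (m : ℕ) (hm : 2 ≤ m) (θ θ' : Fin (2 * m - 1) → ℝ)
    (hspec : ∀ lam ∈ spectrum ℝ (Abar m θ), ∀ mu ∈ spectrum ℝ (Abar m θ), lam + mu ≠ 0)
    (hspec' : ∀ lam ∈ spectrum ℝ (Abar m θ'),
      ∀ mu ∈ spectrum ℝ (Abar m θ'), lam + mu ≠ 0)
    (X Y : Matrix (Fin m) (Fin m) ℝ)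
    (h1 : X * Abar m θ = Abar m θ' * Y)
    (h2 : Y * Abar m θ = Abar m θ' * X)
    (hX : (fun i : Fin m => X i ⟨0, by omega⟩) = Pi.single ⟨0, by omega⟩ (1 : ℝ))
    (hY : (fun j : Fin m => Y ⟨0, by omega⟩ j) = Pi.single ⟨0, by omega⟩ (1 : ℝ)) :
    ((fun j : Fin m => X ⟨0, by omega⟩ j) = Pi.single ⟨0, by omega⟩ (1 : ℝ)) ∧
    ((fun i : Fin m => Y i ⟨0, by omega⟩) = Pi.single ⟨0, by omega⟩ (1 : ℝ)) ∧
    θ ⟨0, by omega⟩ = θ' ⟨0, by omega⟩ ∧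
    (θ ⟨1, by omega⟩ ≠ 0 → |θ ⟨1, by omega⟩| = |θ' ⟨1, by omega⟩|) := by
  set i0 : Fin m := ⟨0, by omega⟩ with hi0
  set i1 : Fin m := ⟨1, by omega⟩ with hi1
  have hAh := Abar_isHermitian m θ
  have hBh := Abar_isHermitian m θ'
  have hAt := Abar_transpose m θ
  have hBt := Abar_transpose m θ'
  set D : Matrix (Fin m) (Fin m) ℝ := X - Y with hD_def
  set S : Matrix (Fin m) (Fin m) ℝ := X + Y with hS_def
  -- intertwining relations
  have hSA : S * Abar m θ = Abar m θ' * S := by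
    rw [hS_def, add_mul, mul_add, h1, h2, add_comm]
  have hDA : D * Abar m θ = -(Abar m θ' * D) := by
    rw [hD_def, sub_mul, h1, h2, mul_sub]
    exact (neg_sub _ _).symm
  have hBD : Abar m θ' * D = -(D * Abar m θ) := by rw [hDA, neg_neg]
  have hASt : Abar m θ * Sᵀ = Sᵀ * Abar m θ' := by
    have h' := congrArg Matrix.transpose hSA
    rwa [Matrix.transpose_mul, Matrix.transpose_mul, hAt, hBt] at h'
  have hADt : Abar m θ * Dᵀ = -(Dᵀ * Abar m θ') := by
    have h' := congrArg Matrix.transpose hDA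
    rwa [Matrix.transpose_mul, Matrix.transpose_neg, Matrix.transpose_mul, hAt, hBt] at h'
  -- the two product matrices vanish
  have hDSt : D * Sᵀ = 0 := by
    apply anticomm_eq_zero hBh hspec'
    calc Abar m θ' * (D * Sᵀ) = (Abar m θ' * D) * Sᵀ := (mul_assoc _ _ _).symm
      _ = -(D * Abar m θ * Sᵀ) := by rw [hBD, Matrix.neg_mul]
      _ = -(D * (Abar m θ * Sᵀ)) := by rw [mul_assoc]
      _ = -(D * (Sᵀ * Abar m θ')) := by rw [hASt]
      _ = -((D * Sᵀ) * Abar m θ') := by rw [mul_assoc]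
  have hDtS : Dᵀ * S = 0 := by
    apply anticomm_eq_zero hAh hspec
    calc Abar m θ * (Dᵀ * S) = (Abar m θ * Dᵀ) * S := (mul_assoc _ _ _).symm
      _ = -(Dᵀ * Abar m θ' * S) := by rw [hADt, Matrix.neg_mul]
      _ = -(Dᵀ * (Abar m θ' * S)) := by rw [mul_assoc]
      _ = -(Dᵀ * (S * Abar m θ)) := by rw [hSA]
      _ = -((Dᵀ * S) * Abar m θ) := by rw [mul_assoc]
  -- basic entry facts
  have hXcol : ∀ i : Fin m, X i i0 = (Pi.single i0 1 : Fin m → ℝ) i := fun i => congrFun hX i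
  have hYrow : ∀ j : Fin m, Y i0 j = (Pi.single i0 1 : Fin m → ℝ) j := fun j => congrFun hY j
  have hSrow : ∀ j : Fin m, S i0 j = D i0 j + 2 * (Pi.single i0 1 : Fin m → ℝ) j := by
    intro j
    rw [hS_def, hD_def, Matrix.add_apply, Matrix.sub_apply, hYrow j]
    ring
  have hScol : ∀ k : Fin m, S k i0 = 2 * (Pi.single i0 1 : Fin m → ℝ) k - D k i0 := by
    intro k
    rw [hS_def, hD_def, Matrix.add_apply, Matrix.sub_apply, hXcol k]
    ring
  -- the two key scalar relations
  have E1 : ∀ i : Fin m, (∑ j, D i j * D i0 j) + 2 * D i i0 = 0 := by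
    intro i
    have h0 : (D * Sᵀ) i i0 = 0 := by rw [hDSt]; rfl
    rw [Matrix.mul_apply] at h0
    have hre : ∀ j : Fin m, D i j * Sᵀ j i0
        = D i j * D i0 j + 2 * (D i j * (Pi.single i0 1 : Fin m → ℝ) j) := by
      intro j; rw [Matrix.transpose_apply, hSrow j]; ring
    rw [Finset.sum_congr rfl (fun j _ => hre j), Finset.sum_add_distrib, ← Finset.mul_sum] at h0
    rw [sum_mul_single (fun j => D i j) i0] at h0
    exact h0
  have E2 : ∀ j : Fin m, 2 * D i0 j = ∑ k, D k i0 * D k j := by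
    intro j
    have h0 : (Dᵀ * S) j i0 = 0 := by rw [hDtS]; rfl
    rw [Matrix.mul_apply] at h0
    have hre : ∀ k : Fin m, Dᵀ j k * S k i0
        = 2 * (D k j * (Pi.single i0 1 : Fin m → ℝ) k) - D k i0 * D k j := by
      intro k; rw [Matrix.transpose_apply, hScol k]; ring
    rw [Finset.sum_congr rfl (fun k _ => hre k), Finset.sum_sub_distrib, ← Finset.mul_sum] at h0
    rw [sum_mul_single (fun k => D k j) i0] at h0
    linarith [h0]
  -- double-sum swap
  have Tswap : (∑ i, D i i0 * ∑ j, D i j * D i0 j)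
      = ∑ j, D i0 j * ∑ k, D k i0 * D k j := by
    calc (∑ i, D i i0 * ∑ j, D i j * D i0 j)
        = ∑ i, ∑ j, D i i0 * D i j * D i0 j := by
          refine Finset.sum_congr rfl fun i _ => ?_
          rw [Finset.mul_sum]
          exact Finset.sum_congr rfl fun j _ => by ring
      _ = ∑ j, ∑ i, D i i0 * D i j * D i0 j := Finset.sum_comm
      _ = ∑ j, D i0 j * ∑ k, D k i0 * D k j := by
          refine Finset.sum_congr rfl fun j _ => ?_
          rw [Finset.mul_sum]
          exact Finset.sum_congr rfl fun k _ => by ring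
  have Tleft : (∑ i, D i i0 * ∑ j, D i j * D i0 j)
      = -(2 * ∑ i, D i i0 * D i i0) := by
    rw [Finset.mul_sum]
    rw [← Finset.sum_neg_distrib]
    refine Finset.sum_congr rfl fun i _ => ?_
    have h' : (∑ j, D i j * D i0 j) = -(2 * D i i0) := by linarith [E1 i]
    rw [h']; ring
  have Tright : (∑ j, D i0 j * ∑ k, D k i0 * D k j)
      = 2 * ∑ j, D i0 j * D i0 j := by
    rw [Finset.mul_sum]
    refine Finset.sum_congr rfl fun j _ => ?_
    rw [← E2 j]; ring
  have hSa : (0:ℝ) ≤ ∑ i, D i i0 * D i i0 :=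
    Finset.sum_nonneg fun i _ => mul_self_nonneg _
  have hSb : (0:ℝ) ≤ ∑ j, D i0 j * D i0 j :=
    Finset.sum_nonneg fun j _ => mul_self_nonneg _
  have hSa0 : (∑ i, D i i0 * D i i0) = 0 := by
    have := Tswap; rw [Tleft, Tright] at this; linarith
  have hSb0 : (∑ j, D i0 j * D i0 j) = 0 := by
    have := Tswap; rw [Tleft, Tright] at this; linarith
  have ha : ∀ i : Fin m, D i i0 = 0 := by
    intro i
    have h' := (Finset.sum_eq_zero_iff_of_nonneg
      (fun i _ => mul_self_nonneg (D i i0))).mp hSa0 i (Finset.mem_univ i)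
    exact mul_self_eq_zero.mp h'
  have hb : ∀ j : Fin m, D i0 j = 0 := by
    intro j
    have h' := (Finset.sum_eq_zero_iff_of_nonneg
      (fun j _ => mul_self_nonneg (D i0 j))).mp hSb0 j (Finset.mem_univ j)
    exact mul_self_eq_zero.mp h'
  -- conclusions 1 and 2
  have hXrow : ∀ j : Fin m, X i0 j = (Pi.single i0 1 : Fin m → ℝ) j := by
    intro j
    have h' := hb j
    rw [hD_def, Matrix.sub_apply] at h'
    have h'' := hYrow j
    linarith
  have hYcol : ∀ i : Fin m, Y i i0 = (Pi.single i0 1 : Fin m → ℝ) i := by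
    intro i
    have h' := ha i
    rw [hD_def, Matrix.sub_apply] at h'
    have h'' := hXcol i
    linarith
  refine ⟨funext fun j => hXrow j, funext fun i => hYcol i, ?_, ?_⟩
  -- conclusion 3 : θ₁ = θ'₁
  · have L : (Y * Abar m θ) i0 i0 = Abar m θ i0 i0 := by
      rw [Matrix.mul_apply]
      have hc : ∀ j : Fin m, Y i0 j * Abar m θ j i0
          = (Pi.single i0 1 : Fin m → ℝ) j * Abar m θ j i0 := fun j => by rw [hYrow j]
      rw [Finset.sum_congr rfl fun j _ => hc j]
      exact sum_single_mul (fun j => Abar m θ j i0) i0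
    have R : (Abar m θ' * X) i0 i0 = Abar m θ' i0 i0 := by
      rw [Matrix.mul_apply]
      have hc : ∀ j : Fin m, Abar m θ' i0 j * X j i0
          = Abar m θ' i0 j * (Pi.single i0 1 : Fin m → ℝ) j := fun j => by rw [hXcol j]
      rw [Finset.sum_congr rfl fun j _ => hc j]
      exact sum_mul_single (fun j => Abar m θ' i0 j) i0
    have hmain : Abar m θ i0 i0 = Abar m θ' i0 i0 := by rw [← L, ← R, h2]
    have vA : Abar m θ i0 i0 = θ ⟨0, by omega⟩ := Abar_zero_zero m hm θ
    have vB : Abar m θ' i0 i0 = θ' ⟨0, by omega⟩ := Abar_zero_zero m hm θ'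
    exact vA.symm.trans (hmain.trans vB)
  -- conclusion 4 : |θ₂| = |θ'₂| when θ₂ ≠ 0
  · intro hθ2
    have hne10 : i1 ≠ i0 := by
      rw [hi0, hi1]
      simp [Fin.ext_iff]
    have hX01 : X i0 i1 = 0 := by
      rw [hXrow i1]
      exact Pi.single_eq_of_ne hne10 1
    have hX10 : X i1 i0 = 0 := by
      rw [hXcol i1]
      exact Pi.single_eq_of_ne hne10 1
    -- h2 at (i0, i1) : -θ₂ = θ'₁ * X i0 i1 - θ'₂ * X i1 i1
    have L1 : (Y * Abar m θ) i0 i1 = -θ ⟨1, by omega⟩ := by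
      rw [Matrix.mul_apply]
      have hc : ∀ j : Fin m, Y i0 j * Abar m θ j i1
          = (Pi.single i0 1 : Fin m → ℝ) j * Abar m θ j i1 := fun j => by rw [hYrow j]
      rw [Finset.sum_congr rfl fun j _ => hc j]
      have h' := sum_single_mul (fun j => Abar m θ j i1) i0
      rw [h']
      exact Abar_zero_one m hm θ
    have R1 : (Abar m θ' * X) i0 i1 = -(θ' ⟨1, by omega⟩ * X i1 i1) := by
      rw [Matrix.mul_apply]
      have h' : (∑ j, Abar m θ' i0 j * X j i1)
          = θ' ⟨0, by omega⟩ * X i0 i1 - θ' ⟨1, by omega⟩ * X i1 i1 :=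
        Abar_row_sum hm θ' (fun j => X j i1)
      rw [h', hX01]
      ring
    have eqA : θ ⟨1, by omega⟩ = θ' ⟨1, by omega⟩ * X i1 i1 := by
      have h' : (-θ ⟨1, by omega⟩ : ℝ) = -(θ' ⟨1, by omega⟩ * X i1 i1) := by
        rw [← L1, ← R1, h2]
      linarith
    -- h1 at (i1, i0) : -θ₂ * X i1 i1 = -θ'₂
    have L2 : (X * Abar m θ) i1 i0 = -(θ ⟨1, by omega⟩ * X i1 i1) := by
      rw [Matrix.mul_apply]
      have h' : (∑ j, X i1 j * Abar m θ j i0)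
          = θ ⟨0, by omega⟩ * X i1 i0 - θ ⟨1, by omega⟩ * X i1 i1 :=
        Abar_col_sum hm θ (fun j => X i1 j)
      rw [h', hX10]
      ring
    have R2 : (Abar m θ' * Y) i1 i0 = -θ' ⟨1, by omega⟩ := by
      rw [Matrix.mul_apply]
      have hc : ∀ j : Fin m, Abar m θ' i1 j * Y j i0
          = Abar m θ' i1 j * (Pi.single i0 1 : Fin m → ℝ) j := fun j => by rw [hYcol j]
      rw [Finset.sum_congr rfl fun j _ => hc j]
      have h' := sum_mul_single (fun j => Abar m θ' i1 j) i0
      rw [h']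
      exact Abar_one_zero m hm θ'
    have eqB : θ' ⟨1, by omega⟩ = θ ⟨1, by omega⟩ * X i1 i1 := by
      have h' : (-(θ ⟨1, by omega⟩ * X i1 i1) : ℝ) = -θ' ⟨1, by omega⟩ := by
        rw [← L2, ← R2, h1]
      linarith
    have hxx : X i1 i1 * X i1 i1 = 1 := by
      have h' : θ ⟨1, by omega⟩ * (X i1 i1 * X i1 i1) = θ ⟨1, by omega⟩ * 1 := by
        rw [mul_one]
        calc θ ⟨1, by omega⟩ * (X i1 i1 * X i1 i1)
            = (θ ⟨1, by omega⟩ * X i1 i1) * X i1 i1 := by ring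
          _ = θ' ⟨1, by omega⟩ * X i1 i1 := by rw [← eqB]
          _ = θ ⟨1, by omega⟩ := eqA.symm
      exact mul_left_cancel₀ hθ2 h'
    rcases mul_self_eq_one_iff.mp hxx with hx1 | hx1
    · rw [eqB, hx1, mul_one]
    · rw [eqB, hx1, mul_neg_one, abs_neg]
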